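/- Over F_4, for k ≥ 1, σ**(x^{2k}) splits (is a product of linear factors) if and only if 2k ∈ {2,4,6}. -/

import Mathlib

open Polynomial

variable {F : Type*} [Field F]

/-- `D` is a (monic) unitary divisor of `S`: `D ∣ S` and `gcd(D, S/D) = 1`. -/
def IsUnitaryDivisor (D S : Polynomial F) : Prop :=
  D.Monic ∧ D ∣ S ∧ IsCoprime D (S / D)

/-- `D` is a (monic) bi-unitary divisor of `S`: `gcd_u(D, S/D) = 1`, i.e. the only common
monic unitary divisor of `D` and `S/D` is `1`. -/
def IsBiunitaryDivisor (D S : Polynomial F) : Prop :=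
  D.Monic ∧ D ∣ S ∧
    ∀ G : Polynomial F, IsUnitaryDivisor G D → IsUnitaryDivisor G (S / D) → G = 1

/-- `σ(S)`: the sum of all monic divisors of `S`. -/
noncomputable def sigma' (S : Polynomial F) : Polynomial F :=
  ∑ᶠ D ∈ {D : Polynomial F | D.Monic ∧ D ∣ S}, D

/-- `σ**(S)`: the sum of all monic bi-unitary divisors of `S`. -/
noncomputable def sigmaStarStar (S : Polynomial F) : Polynomial F :=
  ∑ᶠ D ∈ {D : Polynomial F | IsBiunitaryDivisor D S}, D

/-- `S` is bi-unitary perfect: `σ**(S) = S`. -/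
def IsBUP (S : Polynomial F) : Prop := sigmaStarStar S = S

/-- The field with four elements. -/
abbrev F4 := GaloisField 2 2

/-!
The bi-unitary divisors of `X ^ (2k)` are the `X ^ i` with `i ≠ k`, so
`σ**(X ^ (2k)) = (1 + X + ⋯ + X ^ (2k)) - X ^ k`, and in characteristic two this gives
`(X + 1) σ**(X ^ (2k)) = (X ^ k + 1) (X ^ (k + 1) + 1)`. One of `k`, `k + 1` is odd, and for odd
`m` the polynomial `X ^ m - 1` is separable, so it can only split over `F_4` if `m ≤ 4`.
Conversely `X ^ m - 1` splits for `m ≤ 4`: for `m = 1, 3` because `m ∣ 3 = |F_4ˣ|`, and for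
`m = 2, 4` by the Frobenius identity `X ^ (2m) - 1 = (X ^ m - 1) ^ 2`.
-/

lemma exists_eq_X_pow_of_monic_of_dvd_X_pow {n : ℕ} {D : F[X]} (hD : D.Monic)
    (hdvd : D ∣ X ^ n) : ∃ i ≤ n, D = X ^ i := by
  obtain ⟨i, hi, hassoc⟩ := (dvd_prime_pow prime_X n).mp hdvd
  exact ⟨i, hi, eq_of_monic_of_associated hD (monic_X_pow i) hassoc⟩

lemma X_pow_div_X_pow {n i : ℕ} (h : i ≤ n) : (X ^ n : F[X]) / X ^ i = X ^ (n - i) := by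
  rw [← pow_sub_mul_pow (X : F[X]) h,
    mul_div_cancel_right₀ _ (pow_ne_zero i (X_ne_zero (R := F)))]

lemma X_pow_injective : Function.Injective (fun i : ℕ ↦ (X ^ i : F[X])) :=
  fun i j h ↦ by simpa using congrArg natDegree h

lemma isUnitaryDivisor_X_pow_iff {n : ℕ} {G : F[X]} :
    IsUnitaryDivisor G (X ^ n) ↔ G = 1 ∨ G = X ^ n := by
  constructor
  · rintro ⟨hG, hdvd, hcop⟩
    obtain ⟨i, hi, rfl⟩ := exists_eq_X_pow_of_monic_of_dvd_X_pow hG hdvd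
    rw [X_pow_div_X_pow hi] at hcop
    by_cases hi0 : i = 0
    · simp [hi0]
    by_cases hin : i = n
    · simp [hin]
    exact (not_isUnit_X (hcop.isUnit_of_dvd' (dvd_pow_self X hi0) (dvd_pow_self X (by omega)))).elim
  · rintro (rfl | rfl)
    · exact ⟨monic_one, one_dvd _, isCoprime_one_left⟩
    · refine ⟨monic_X_pow n, dvd_rfl, ?_⟩
      rw [X_pow_div_X_pow le_rfl, Nat.sub_self, pow_zero]
      exact isCoprime_one_right

lemma isBiunitaryDivisor_X_pow_iff {n : ℕ} (hn : n ≠ 0) {D : F[X]} :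
    IsBiunitaryDivisor D (X ^ n) ↔ ∃ i ≤ n, 2 * i ≠ n ∧ D = X ^ i := by
  constructor
  · rintro ⟨hD, hdvd, hG⟩
    obtain ⟨i, hi, rfl⟩ := exists_eq_X_pow_of_monic_of_dvd_X_pow hD hdvd
    refine ⟨i, hi, fun hin ↦ ?_, rfl⟩
    have hunit : IsUnitaryDivisor (X ^ i : F[X]) (X ^ i) :=
      isUnitaryDivisor_X_pow_iff.mpr (.inr rfl)
    have hquot : (X ^ n : F[X]) / X ^ i = X ^ i := by rw [X_pow_div_X_pow hi]; congr 1; omega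
    have hunit' : IsUnitaryDivisor (X ^ i : F[X]) (X ^ n / X ^ i) := by rwa [hquot]
    have := X_pow_injective ((hG _ hunit hunit').trans (pow_zero X).symm)
    omega
  · rintro ⟨i, hi, hin, rfl⟩
    refine ⟨monic_X_pow i, pow_dvd_pow X hi, fun G hGi hGquot ↦ ?_⟩
    rw [X_pow_div_X_pow hi, isUnitaryDivisor_X_pow_iff] at hGquot
    rcases isUnitaryDivisor_X_pow_iff.mp hGi with rfl | rfl
    · rfl
    refine hGquot.resolve_right fun h ↦ ?_
    have := X_pow_injective h
    omega

lemma sigmaStarStar_X_pow {n : ℕ} (hn : n ≠ 0) :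
    sigmaStarStar (X ^ n : F[X]) =
      ∑ i ∈ (Finset.range (n + 1)).filter (2 * · ≠ n), X ^ i := by
  classical
  have hset : {D : F[X] | IsBiunitaryDivisor D (X ^ n)} =
      (((Finset.range (n + 1)).filter (2 * · ≠ n)).image (X ^ ·) : Finset F[X]) := by
    ext D
    simp only [Set.mem_ofPred_eq, isBiunitaryDivisor_X_pow_iff hn, Finset.coe_image,
      Finset.coe_filter, Set.mem_image]
    constructor
    · rintro ⟨i, hi, hin, rfl⟩; exact ⟨i, ⟨Finset.mem_range_succ_iff.mpr hi, hin⟩, rfl⟩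
    · rintro ⟨i, ⟨hi, hin⟩, rfl⟩; exact ⟨i, Finset.mem_range_succ_iff.mp hi, hin, rfl⟩
  rw [sigmaStarStar, hset, finsum_mem_coe_finset,
    Finset.sum_image fun i _ j _ h ↦ X_pow_injective h]

lemma sigmaStarStar_X_pow_two_mul {k : ℕ} (hk : k ≠ 0) :
    sigmaStarStar (X ^ (2 * k) : F[X]) = ∑ i ∈ Finset.range (2 * k + 1), X ^ i - X ^ k := by
  have hmiddle : (Finset.range (2 * k + 1)).filter (fun i ↦ ¬ 2 * i ≠ 2 * k) = {k} := by
    ext i; simp only [Finset.mem_filter, Finset.mem_range, Finset.mem_singleton]; omega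
  have hsplit := Finset.sum_filter_add_sum_filter_not (Finset.range (2 * k + 1)) (2 * · ≠ 2 * k)
    (X ^ · : ℕ → F[X])
  rw [hmiddle, Finset.sum_singleton] at hsplit
  rw [sigmaStarStar_X_pow (by omega), ← hsplit, add_sub_cancel_right]

lemma sub_one_mul_geom_sum_sub_pow_of_charTwo {R : Type*} [CommRing R] [CharP R 2] (x : R)
    (k : ℕ) : (x - 1) * (∑ i ∈ Finset.range (2 * k + 1), x ^ i - x ^ k) =
      (x ^ k - 1) * (x ^ (k + 1) - 1) := by
  linear_combination geom_sum_mul x (2 * k + 1) + (x ^ k - 1) * CharTwo.two_eq_zero (R := R)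

section FiniteField

variable [Finite F]

lemma Polynomial.Separable.natDegree_le_card_of_splits {f : F[X]} (hsep : f.Separable)
    (hf : f.Splits) : f.natDegree ≤ Nat.card F := by
  classical
  have := Fintype.ofFinite F
  rw [hf.natDegree_eq_card_roots, ← Multiset.toFinset_card_of_nodup (nodup_roots hsep),
    Nat.card_eq_fintype_card]
  exact Finset.card_le_univ _

lemma not_splits_X_pow_sub_one_of_card_lt {m : ℕ} (hm : (m : F) ≠ 0) (hcard : Nat.card F < m) :
    ¬ (X ^ m - 1 : F[X]).Splits := fun hsplit ↦ by
  have := (X_pow_sub_one_separable_iff.mpr hm).natDegree_le_card_of_splits hsplit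
  have hdeg : (X ^ m - 1 : F[X]).natDegree = m := by
    simpa using natDegree_X_pow_sub_C (n := m) (r := (1 : F))
  omega

lemma splits_X_pow_sub_one_of_dvd_card_sub_one {m : ℕ} (hm : m ∣ Nat.card F - 1) :
    (X ^ m - 1 : F[X]).Splits := by
  have := Fintype.ofFinite F
  set q := Fintype.card F
  have hq : 1 < q := Fintype.one_lt_card
  have hfield : (X ^ q - X : F[X]).Splits := by
    rw [splits_iff_card_roots, FiniteField.roots_X_pow_card_sub_X,
      FiniteField.X_pow_card_sub_X_natDegree_eq F hq]
    rfl
  have hfactor : X ^ q - X = X * (X ^ (q - 1) - 1 : F[X]) := by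
    rw [mul_sub, mul_one, ← pow_succ', Nat.sub_add_cancel hq.le]
  obtain ⟨j, hj⟩ := hm
  rw [Nat.card_eq_fintype_card] at hj
  have hdvd : (X ^ m - 1 : F[X]) ∣ X ^ q - X := by
    rw [hfactor, hj, pow_mul]
    simpa using (sub_dvd_pow_sub_pow (X ^ m : F[X]) 1 j).mul_left X
  exact hfield.of_dvd (FiniteField.X_pow_card_sub_X_ne_zero F hq) hdvd

end FiniteField

lemma Polynomial.Splits.X_pow_char_mul_sub_one (p : ℕ) [Fact p.Prime] [CharP F p] {m : ℕ}
    (h : (X ^ m - 1 : F[X]).Splits) : (X ^ (p * m) - 1 : F[X]).Splits := by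
  rw [pow_mul', ← one_pow p, ← sub_pow_char]
  exact h.pow p

lemma Polynomial.X_pow_sub_one_ne_zero {R : Type*} [CommRing R] [Nontrivial R] {m : ℕ}
    (hm : m ≠ 0) : (X ^ m - 1 : R[X]) ≠ 0 := by
  simpa using X_pow_sub_C_ne_zero (Nat.pos_of_ne_zero hm) (1 : R)

lemma F4.natCard : Nat.card F4 = 4 := GaloisField.card 2 2 two_ne_zero

lemma F4.splits_X_pow_sub_one {m : ℕ} (hm : m ≤ 4) : (X ^ m - 1 : F4[X]).Splits := by
  have hdvd : ∀ d, d ∣ 3 → (X ^ d - 1 : F4[X]).Splits := fun d hd ↦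
    splits_X_pow_sub_one_of_dvd_card_sub_one (by rwa [F4.natCard])
  have h1 := hdvd 1 (one_dvd 3)
  interval_cases m
  · simp
  · exact h1
  · exact h1.X_pow_char_mul_sub_one 2
  · exact hdvd 3 dvd_rfl
  · exact (h1.X_pow_char_mul_sub_one 2).X_pow_char_mul_sub_one 2

lemma F4.not_splits_X_pow_sub_one {m : ℕ} (hodd : Odd m) (hm : 4 < m) :
    ¬ (X ^ m - 1 : F4[X]).Splits := by
  refine not_splits_X_pow_sub_one_of_card_lt ?_ (F4.natCard ▸ hm)
  rw [Ne, CharP.cast_eq_zero_iff F4 2]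
  exact hodd.not_two_dvd_nat

lemma F4.splits_X_pow_sub_one_mul_X_pow_succ_sub_one_iff {k : ℕ} (hk : k ≠ 0) :
    ((X ^ k - 1) * (X ^ (k + 1) - 1) : F4[X]).Splits ↔ k ≤ 3 := by
  rw [splits_mul (X_pow_sub_one_ne_zero hk) (X_pow_sub_one_ne_zero k.succ_ne_zero)]
  refine ⟨fun ⟨hsplit, hsplit_succ⟩ ↦ ?_, fun hk3 ↦ ⟨F4.splits_X_pow_sub_one (by omega),
    F4.splits_X_pow_sub_one (by omega)⟩⟩
  by_contra! hlarge
  rcases Nat.even_or_odd k with heven | hodd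
  · exact F4.not_splits_X_pow_sub_one heven.add_one (by omega) hsplit_succ
  · exact F4.not_splits_X_pow_sub_one hodd (by have := Nat.odd_iff.mp hodd; omega) hsplit

theorem stmt6 (k : ℕ) (hk : 1 ≤ k) :
    (sigmaStarStar (X ^ (2 * k) : Polynomial F4)).Splits ↔
      2 * k ∈ ({2, 4, 6} : Set ℕ) := by
  have hk0 : k ≠ 0 := Nat.one_le_iff_ne_zero.mp hk
  have hmem : 2 * k ∈ ({2, 4, 6} : Set ℕ) ↔ k ≤ 3 := by
    simp only [Set.mem_insert_iff, Set.mem_singleton_iff]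
    omega
  have hlinear : ((X - 1) * sigmaStarStar (X ^ (2 * k) : F4[X])).Splits ↔
      (sigmaStarStar (X ^ (2 * k) : F4[X])).Splits := by
    simpa using splits_X_sub_C_mul_iff (a := (1 : F4))
  rw [hmem, ← F4.splits_X_pow_sub_one_mul_X_pow_succ_sub_one_iff hk0,
    ← sub_one_mul_geom_sum_sub_pow_of_charTwo, ← sigmaStarStar_X_pow_two_mul hk0, hlinear]
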